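/- arXiv:1504.02761 — 8 statements merged into one kernel-verified Lean document; each statement's English description precedes it below -/
import Mathlib

section
/- If w is a weird number and p is a prime with p > σ(w), then p·w is also weird. -/
/-- Sum of the positive divisors of `n`. -/
def sigma' (n : ℕ) : ℕ := ∑ d ∈ n.divisors, d

/-- `n` is abundant if `σ(n) > 2n`. -/
def Abundant (n : ℕ) : Prop := 2 * n < sigma' n

/-- `n` is pseudoperfect (in the weak sense) if some subset of its proper divisors sums to `n`. -/
def Pseudoperfect (n : ℕ) : Prop := ∃ s ⊆ n.properDivisors, ∑ d ∈ s, d = n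

/-- `n` is weird if it is abundant and no subset of its proper divisors sums to `n`. -/
def Weird (n : ℕ) : Prop := Abundant n ∧ ¬ Pseudoperfect n

/-!
Abundance passes to multiples, since `d ↦ m * d` maps the divisors of `n` into those of `m * n`.
For pseudoperfectness, split a subset of the proper divisors of `p * w` summing to `p * w` into
the multiples of `p` and the rest. The rest divide `w`, so their sum is a multiple of `p` that is
at most `σ(w) < p`, hence zero; dividing the multiples by `p` gives proper divisors of `w` summing
to `w`.
-/

open Finset

theorem mul_sigma'_le_sigma'_mul (m n : ℕ) : m * sigma' n ≤ sigma' (m * n) := by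
  rcases eq_or_ne m 0 with rfl | hm
  · simp
  rcases eq_or_ne n 0 with rfl | hn
  · simp [sigma']
  calc m * sigma' n = ∑ d ∈ n.divisors.image (m * ·), d := by
        rw [sigma', mul_sum, sum_image fun _ _ _ _ h => Nat.eq_of_mul_eq_mul_left (by omega) h]
    _ ≤ sigma' (m * n) := by
        refine sum_le_sum_of_subset fun e he => ?_
        obtain ⟨d, hd, rfl⟩ := mem_image.mp he
        exact Nat.mem_divisors.mpr ⟨mul_dvd_mul_left m (Nat.dvd_of_mem_divisors hd), by positivity⟩

theorem Abundant.mul_left {m n : ℕ} (h : Abundant n) (hm : m ≠ 0) : Abundant (m * n) := by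
  unfold Abundant at *
  calc 2 * (m * n) = m * (2 * n) := by ring
    _ < m * sigma' n := Nat.mul_lt_mul_of_pos_left h (Nat.pos_of_ne_zero hm)
    _ ≤ sigma' (m * n) := mul_sigma'_le_sigma'_mul m n

theorem Nat.mul_mem_properDivisors_mul_left {p d n : ℕ} (hp : p ≠ 0) :
    p * d ∈ (p * n).properDivisors ↔ d ∈ n.properDivisors := by
  simp only [Nat.mem_properDivisors, Nat.mul_dvd_mul_iff_left (Nat.pos_of_ne_zero hp),
    Nat.mul_lt_mul_left (Nat.pos_of_ne_zero hp)]

theorem Nat.dvd_of_dvd_prime_mul_of_not_dvd {p x n : ℕ} (hp : p.Prime) (hx : x ∣ p * n)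
    (hpx : ¬ p ∣ x) : x ∣ n :=
  ((hp.coprime_iff_not_dvd.mpr hpx).symm).dvd_of_dvd_mul_left hx

theorem Pseudoperfect.of_prime_mul {p w : ℕ} (hp : p.Prime) (hlt : sigma' w < p)
    (h : Pseudoperfect (p * w)) : Pseudoperfect w := by
  rcases eq_or_ne w 0 with rfl | hw
  · exact ⟨∅, empty_subset _, rfl⟩
  obtain ⟨s, hs, hsum⟩ := h
  set T := w.properDivisors.filter (p * · ∈ s)
  have hmul_inj : Function.Injective (p * ·) := fun _ _ h => Nat.eq_of_mul_eq_mul_left hp.pos h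
  have hmultiples : s.filter (p ∣ ·) = T.image (p * ·) := by
    ext x
    simp only [mem_filter, mem_image, T]
    constructor
    · rintro ⟨hx, d, rfl⟩
      exact ⟨d, ⟨(Nat.mul_mem_properDivisors_mul_left hp.ne_zero).mp (hs hx), hx⟩, rfl⟩
    · rintro ⟨d, ⟨-, hd⟩, rfl⟩
      exact ⟨hd, dvd_mul_right p d⟩
  have hrest : ∑ x ∈ s.filter (¬ p ∣ ·), x = 0 := by
    have hsub : s.filter (¬ p ∣ ·) ⊆ w.divisors := fun x hx => by
      obtain ⟨hxs, hpx⟩ := mem_filter.mp hx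
      exact Nat.mem_divisors.mpr
        ⟨Nat.dvd_of_dvd_prime_mul_of_not_dvd hp (Nat.mem_properDivisors.mp (hs hxs)).1 hpx, hw⟩
    have hdvd : p ∣ ∑ x ∈ s.filter (¬ p ∣ ·), x := by
      have htotal : p ∣ ∑ x ∈ s.filter (p ∣ ·), x + ∑ x ∈ s.filter (¬ p ∣ ·), x := by
        rw [sum_filter_add_sum_filter_not, hsum]
        exact dvd_mul_right p w
      exact (Nat.dvd_add_right (dvd_sum fun x hx => (mem_filter.mp hx).2)).mp htotal
    exact Nat.eq_zero_of_dvd_of_lt hdvd ((sum_le_sum_of_subset hsub).trans_lt hlt)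
  refine ⟨T, filter_subset _ _, Nat.eq_of_mul_eq_mul_left hp.pos ?_⟩
  rw [mul_sum, ← sum_image (f := fun x => x) fun _ _ _ _ h => hmul_inj h, ← hmultiples, ← hsum,
    ← sum_filter_add_sum_filter_not s (p ∣ ·), hrest, add_zero]

theorem weird_mul_large_prime (w p : ℕ) (hw : Weird w) (hp : p.Prime)
    (hlarge : sigma' w < p) : Weird (p * w) :=
  ⟨hw.1.mul_left hp.ne_zero, fun h => hw.2 (h.of_prime_mul hp hlarge)⟩
end

section
/- Let k ≥ 1, let p < q be odd primes, let n = 2^k·p·q, M = 2^{k+1} - 1, and a = σ(n) - 2n. If 0 < a ≤ M, then n is pseudoperfect. -/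
open Finset

lemma Nat.exists_subset_properDivisors_sum_eq_of_lt_two_pow {n k a : ℕ} (hdvd : 2 ^ k ∣ n)
    (hlt : 2 ^ k < n) (ha : a < 2 ^ (k + 1)) : ∃ t ⊆ n.properDivisors, ∑ d ∈ t, d = a := by
  refine ⟨a.bitIndices.toFinset.map ⟨(2 ^ ·), Nat.pow_right_injective le_rfl⟩, ?_, ?_⟩
  · intro d hd
    obtain ⟨i, hi, rfl⟩ := mem_map.1 hd
    have hik : i ≤ k := Nat.lt_succ_iff.1 <| (Nat.pow_lt_pow_iff_right one_lt_two).1 <|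
      (Nat.two_pow_le_of_mem_bitIndices (List.mem_toFinset.1 hi)).trans_lt ha
    exact Nat.mem_properDivisors.2
      ⟨(pow_dvd_pow 2 hik).trans hdvd, (Nat.pow_le_pow_right two_pos hik).trans_lt hlt⟩
  · rw [sum_map]
    exact sum_toFinset_bitIndices_two_pow a

lemma pseudoperfect_of_sum_properDivisors_eq_add {n a : ℕ} {t : Finset ℕ}
    (hσ : ∑ d ∈ n.properDivisors, d = n + a) (ht : t ⊆ n.properDivisors)
    (hta : ∑ d ∈ t, d = a) : Pseudoperfect n :=
  ⟨n.properDivisors \ t, sdiff_subset, by have := sum_sdiff (f := id) ht; simp_all⟩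

theorem pseudoperfect_of_two_pow_dvd {n k : ℕ} (hdvd : 2 ^ k ∣ n) (hlt : 2 ^ k < n)
    (hle : 2 * n ≤ sigma' n) (hσ : sigma' n < 2 * n + 2 ^ (k + 1)) : Pseudoperfect n := by
  obtain ⟨t, ht, hta⟩ :=
    Nat.exists_subset_properDivisors_sum_eq_of_lt_two_pow (a := sigma' n - 2 * n) hdvd hlt
      (by omega)
  refine pseudoperfect_of_sum_properDivisors_eq_add ?_ ht hta
  have := Nat.sum_divisors_eq_sum_properDivisors_add_self (n := n)
  unfold sigma' at *
  omega

theorem pseudoperfect_of_small_abundance_general (k p q : ℕ) (hp : p.Prime)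
    (hq : q.Prime)
    (ha : 0 < (sigma' (2 ^ k * p * q) : ℤ) - 2 * (2 ^ k * p * q))
    (haM : (sigma' (2 ^ k * p * q) : ℤ) - 2 * (2 ^ k * p * q) ≤ 2 ^ (k + 1) - 1) :
    Pseudoperfect (2 ^ k * p * q) := by
  have one_lt_pq : 1 < p * q := Nat.one_lt_mul_iff.2 ⟨hp.pos, hq.pos, Or.inl hp.one_lt⟩
  refine pseudoperfect_of_two_pow_dvd (k := k) (by rw [mul_assoc]; exact dvd_mul_right _ _)
    (by rw [mul_assoc]; exact lt_mul_right (by positivity) one_lt_pq)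
    (by zify; omega) (by zify; omega)

theorem pseudoperfect_of_small_abundance (k p q : ℕ) (hk : 1 ≤ k) (hp : p.Prime)
    (hq : q.Prime) (hop : Odd p) (hoq : Odd q) (hpq : p < q)
    (ha : 0 < (sigma' (2 ^ k * p * q) : ℤ) - 2 * (2 ^ k * p * q))
    (haM : (sigma' (2 ^ k * p * q) : ℤ) - 2 * (2 ^ k * p * q) ≤ 2 ^ (k + 1) - 1) :
    Pseudoperfect (2 ^ k * p * q) :=
  pseudoperfect_of_small_abundance_general k p q hp hq ha haM
end

section
/- Let k ≥ 1, let p < q be odd primes with n = 2^k·p·q abundant, and set M = 2^{k+1} - 1. If p ≤ M, then n is pseudoperfect. -/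
/-!
Split `2 ^ k * p * q = (1 + 2 + ⋯ + 2 ^ (k - 1)) * p * q + p * q` and expand the last summand in
binary: `p * q = ∑ 2 ^ j * q` over the bit positions `j` of `p`. Since `p < 2 ^ (k + 1)`, every
such `j` is at most `k`, so each `2 ^ j * q` is a proper divisor, as is each `2 ^ j * p * q` with
`j < k`. The two families are disjoint because `p` is odd and `p ≠ 1`, so `2 ^ i * p` is never a
power of two.
-/

open Finset

theorem sum_range_two_pow_mul_add (k c : ℕ) : ∑ j ∈ range k, 2 ^ j * c + c = 2 ^ k * c := by
  induction k with
  | zero => simp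
  | succ k ih => rw [sum_range_succ, add_right_comm, ih]; ring

theorem sum_toFinset_bitIndices_two_pow_mul (p c : ℕ) :
    ∑ j ∈ p.bitIndices.toFinset, 2 ^ j * c = p * c := by
  rw [← sum_mul, sum_toFinset_bitIndices_two_pow]

theorem two_pow_mul_left_injective {c : ℕ} (hc : c ≠ 0) :
    Function.Injective (fun j : ℕ => 2 ^ j * c) :=
  (mul_left_injective₀ hc).comp (Nat.pow_right_injective le_rfl)

theorem two_pow_mul_ne_two_pow {p : ℕ} (hp : Odd p) (hp1 : p ≠ 1) (a b : ℕ) :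
    2 ^ a * p ≠ 2 ^ b := fun h =>
  hp1 <| (hp.coprime_two_right.pow_right b).eq_one_of_dvd (Dvd.intro_left _ h)

theorem two_pow_mul_mem_properDivisors {j k c : ℕ} (hjk : j < k) (hc : 0 < c) :
    2 ^ j * c ∈ (2 ^ k * c).properDivisors :=
  Nat.mem_properDivisors.2 ⟨mul_dvd_mul_right (pow_dvd_pow 2 hjk.le) c,
    Nat.mul_lt_mul_of_pos_right (Nat.pow_lt_pow_right one_lt_two hjk) hc⟩

theorem two_pow_mul_mem_properDivisors_two_pow_mul_mul {j k p q : ℕ} (hjk : j ≤ k) (hp : 1 < p)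
    (hq : 0 < q) : 2 ^ j * q ∈ (2 ^ k * p * q).properDivisors := by
  refine Nat.mem_properDivisors.2 ⟨mul_dvd_mul_right (dvd_mul_of_dvd_left (pow_dvd_pow 2 hjk) p) q,
    Nat.mul_lt_mul_of_pos_right ?_ hq⟩
  calc 2 ^ j ≤ 2 ^ k := Nat.pow_le_pow_right two_pos hjk
    _ < 2 ^ k * p := lt_mul_of_one_lt_right (Nat.two_pow_pos k) hp

theorem pseudoperfect_two_pow_mul_mul {k p q : ℕ} (hp : Odd p) (hp1 : 1 < p)
    (hpk : p < 2 ^ (k + 1)) (hq : 0 < q) : Pseudoperfect (2 ^ k * p * q) := by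
  have hpq : 0 < p * q := Nat.mul_pos (by omega) hq
  set A := (range k).image (fun j => 2 ^ j * (p * q))
  set B := p.bitIndices.toFinset.image (fun j => 2 ^ j * q)
  have hdisj : Disjoint A B := by
    simp only [A, B, disjoint_left, mem_image]
    rintro _ ⟨a, -, rfl⟩ ⟨b, -, hb⟩
    refine two_pow_mul_ne_two_pow hp hp1.ne' a b (Nat.eq_of_mul_eq_mul_right hq ?_)
    rw [hb, mul_assoc]
  refine ⟨A ∪ B, union_subset ?_ ?_, ?_⟩
  · simp only [A, subset_iff, mem_image, mem_range]
    rintro _ ⟨j, hj, rfl⟩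
    rw [mul_assoc]
    exact two_pow_mul_mem_properDivisors hj hpq
  · simp only [B, subset_iff, mem_image, List.mem_toFinset]
    rintro _ ⟨j, hj, rfl⟩
    have hjk : 2 ^ j < 2 ^ (k + 1) := (Nat.two_pow_le_of_mem_bitIndices hj).trans_lt hpk
    exact two_pow_mul_mem_properDivisors_two_pow_mul_mul
      (Nat.lt_succ_iff.1 ((Nat.pow_lt_pow_iff_right one_lt_two).1 hjk)) hp1 hq
  · rw [sum_union hdisj, sum_image (two_pow_mul_left_injective hpq.ne').injOn,
      sum_image (two_pow_mul_left_injective hq.ne').injOn, sum_toFinset_bitIndices_two_pow_mul,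
      sum_range_two_pow_mul_add, mul_assoc]

theorem pseudoperfect_of_small_p_general (k p q : ℕ) (hp : p.Prime) (hq : q.Prime)
    (hop : Odd p) (hpM : p ≤ 2 ^ (k + 1) - 1) : Pseudoperfect (2 ^ k * p * q) :=
  pseudoperfect_two_pow_mul_mul hop hp.one_lt
    ((Nat.le_sub_one_iff_lt (Nat.two_pow_pos _)).1 hpM) hq.pos

theorem pseudoperfect_of_small_p (k p q : ℕ) (hk : 1 ≤ k) (hp : p.Prime) (hq : q.Prime)
    (hop : Odd p) (hoq : Odd q) (hpq : p < q) (hab : Abundant (2 ^ k * p * q))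
    (hpM : p ≤ 2 ^ (k + 1) - 1) : Pseudoperfect (2 ^ k * p * q) :=
  pseudoperfect_of_small_p_general k p q hp hq hop hpM
end

section
/- Let k ≥ 1, let p < q be odd primes, n = 2^k·p·q, M = 2^{k+1} - 1, a = σ(n) - 2n. If n is weird then 4 divides a. -/
/-!
With `M = 2^(k+1) - 1` we have `σ(n) = M (p+1) (q+1)` and `2n = (M+1) p q`, so
`σ(n) - 2n = M (M+1) - (p - M) (q - M)`. Both `p - M` and `q - M` are even, and `M + 1 = 2^(k+1)`
is divisible by `4` as soon as `k ≥ 1`.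
-/

lemma four_dvd_mul_of_even {α : Type*} [CommSemiring α] {a b : α} (ha : Even a) (hb : Even b) :
    4 ∣ a * b := by
  rw [show (4 : α) = 2 * 2 by norm_num]
  exact mul_dvd_mul (even_iff_two_dvd.mp ha) (even_iff_two_dvd.mp hb)

lemma sigma'_mul_of_coprime {m n : ℕ} (h : m.Coprime n) : sigma' (m * n) = sigma' m * sigma' n :=
  Nat.Coprime.sum_divisors_mul h

lemma sigma'_prime {p : ℕ} (hp : p.Prime) : sigma' p = p + 1 := by
  rw [sigma', hp.divisors, Finset.sum_pair hp.one_lt.ne, add_comm]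

lemma sigma'_two_pow (k : ℕ) : (sigma' (2 ^ k) : ℤ) = 2 ^ (k + 1) - 1 := by
  have hgeom := geom_sum_mul (2 : ℤ) (k + 1)
  norm_num at hgeom
  rw [sigma', Nat.sum_divisors_prime_pow Nat.prime_two]
  push_cast
  exact hgeom

lemma sigma'_two_pow_mul_mul {k p q : ℕ} (hp : p.Prime) (hq : q.Prime) (hop : Odd p)
    (hoq : Odd q) (hpq : p ≠ q) :
    (sigma' (2 ^ k * p * q) : ℤ) = (2 ^ (k + 1) - 1) * (p + 1) * (q + 1) := by
  have hp2 : (2 ^ k).Coprime p := (Nat.coprime_two_left.mpr hop).pow_left k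
  have hq2 : (2 ^ k).Coprime q := (Nat.coprime_two_left.mpr hoq).pow_left k
  have hpq' : p.Coprime q := (Nat.coprime_primes hp hq).mpr hpq
  rw [sigma'_mul_of_coprime (hq2.mul_left hpq'), sigma'_mul_of_coprime hp2, sigma'_prime hp,
    sigma'_prime hq]
  push_cast
  rw [sigma'_two_pow]

theorem weird_abundance_div_four_general (k p q : ℕ) (hk : 1 ≤ k) (hp : p.Prime) (hq : q.Prime)
    (hop : Odd p) (hoq : Odd q) (hpq : p < q) :
    (4 : ℤ) ∣ (sigma' (2 ^ k * p * q) : ℤ) - 2 * (2 ^ k * p * q) := by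
  set M : ℤ := 2 ^ (k + 1) - 1 with hM
  have habund : (sigma' (2 ^ k * p * q) : ℤ) - 2 * (2 ^ k * p * q)
      = M * (M + 1) - (p - M) * (q - M) := by
    rw [sigma'_two_pow_mul_mul hp hq hop hoq hpq.ne, hM]
    ring
  have hM_odd : Odd M := by
    rw [hM, pow_succ]
    exact (even_two.mul_left _).sub_odd odd_one
  have hM_succ : (4 : ℤ) ∣ M + 1 := by
    rw [hM, sub_add_cancel]
    exact pow_dvd_pow 2 (by omega : 2 ≤ k + 1)
  rw [habund]
  exact dvd_sub (hM_succ.mul_left M)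
    (four_dvd_mul_of_even (hop.natCast.sub_odd hM_odd) (hoq.natCast.sub_odd hM_odd))

theorem weird_abundance_div_four (k p q : ℕ) (hk : 1 ≤ k) (hp : p.Prime) (hq : q.Prime)
    (hop : Odd p) (hoq : Odd q) (hpq : p < q) (hw : Weird (2 ^ k * p * q)) :
    (4 : ℤ) ∣ (sigma' (2 ^ k * p * q) : ℤ) - 2 * (2 ^ k * p * q) :=
  weird_abundance_div_four_general k p q hk hp hq hop hoq hpq
end

section
/- Let k ≥ 1, let p < q be odd primes, n = 2^k·p·q, M = 2^{k+1} - 1. If σ(n) - 2n = M + 1 = 2^{k+1} and M < p, then n is weird. -/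
/-!
If `s` is a set of proper divisors of `n` summing to `n`, the complementary set of proper divisors
sums to the abundance `a = σ(n) - 2n`, so all its members are divisors `d ≤ a`. Here
`a = 2^(k+1) < p < q`, so those divisors divide `2^k`, and together they sum to at most
`2^(k+1) - 1 < a`.
-/

theorem exists_subset_properDivisors_sum_eq_abundance {n : ℕ} (h : Pseudoperfect n) :
    ∃ t ⊆ n.properDivisors, ∑ d ∈ t, d = sigma' n - 2 * n := by
  obtain ⟨s, hs, hsum⟩ := h
  refine ⟨n.properDivisors \ s, Finset.sdiff_subset, ?_⟩
  have hsplit := Finset.sum_sdiff (f := fun d => d) hs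
  have hσ : sigma' n = ∑ d ∈ n.properDivisors, d + n :=
    Nat.sum_divisors_eq_sum_properDivisors_add_self
  omega

theorem not_pseudoperfect_of_sum_small_divisors_lt {n : ℕ}
    (h : ∑ d ∈ n.divisors with d ≤ sigma' n - 2 * n, d < sigma' n - 2 * n) :
    ¬ Pseudoperfect n := by
  intro hn
  obtain ⟨t, ht, htsum⟩ := exists_subset_properDivisors_sum_eq_abundance hn
  have hsub : t ⊆ n.divisors.filter (· ≤ sigma' n - 2 * n) := fun d hd =>
    Finset.mem_filter.2 ⟨Nat.properDivisors_subset_divisors (ht hd),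
      htsum ▸ Finset.single_le_sum (f := fun d => d) (fun _ _ => Nat.zero_le _) hd⟩
  have := Finset.sum_le_sum_of_subset (f := fun d => d) hsub
  omega

theorem Nat.dvd_of_dvd_mul_prime_of_lt {m p d : ℕ} (hp : p.Prime) (hd : d ∣ m * p)
    (hd0 : 0 < d) (hdp : d < p) : d ∣ m :=
  have hpd : ¬ p ∣ d := fun h => (Nat.le_of_dvd hd0 h).not_gt hdp
  ((hp.coprime_iff_not_dvd.2 hpd).symm).dvd_of_dvd_mul_right hd

theorem Nat.Prime.sum_divisors_pow_lt {p : ℕ} (hp : p.Prime) (k : ℕ) :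
    ∑ d ∈ (p ^ k).divisors, d < p ^ (k + 1) := by
  rw [Nat.sum_divisors_prime_pow hp]
  exact Nat.geomSum_lt hp.two_le fun i hi => Finset.mem_range.1 hi

theorem sum_small_divisors_two_pow_mul_prime_mul_prime_lt {k p q a : ℕ}
    (hp : p.Prime) (hq : q.Prime) (hap : a < p) (haq : a < q) (ha : 2 ^ (k + 1) ≤ a) :
    ∑ d ∈ (2 ^ k * p * q).divisors with d ≤ a, d < a := by
  have hsub : (2 ^ k * p * q).divisors.filter (· ≤ a) ⊆ (2 ^ k).divisors := by
    intro d hd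
    obtain ⟨hdn, hda⟩ := Finset.mem_filter.1 hd
    have hd0 := Nat.pos_of_mem_divisors hdn
    have hdq := Nat.dvd_of_dvd_mul_prime_of_lt hq (Nat.dvd_of_mem_divisors hdn) hd0 (by omega)
    have hdp := Nat.dvd_of_dvd_mul_prime_of_lt hp hdq hd0 (by omega)
    exact Nat.mem_divisors.2 ⟨hdp, by positivity⟩
  calc ∑ d ∈ (2 ^ k * p * q).divisors with d ≤ a, d
      ≤ ∑ d ∈ (2 ^ k).divisors, d := Finset.sum_le_sum_of_subset hsub
    _ < 2 ^ (k + 1) := Nat.prime_two.sum_divisors_pow_lt k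
    _ ≤ a := ha

theorem weird_of_abundance_eq_general (k p q : ℕ) (hp : p.Prime) (hq : q.Prime)
    (hop : Odd p) (hpq : p < q)
    (ha : (sigma' (2 ^ k * p * q) : ℤ) - 2 * (2 ^ k * p * q) = 2 ^ (k + 1))
    (hMp : 2 ^ (k + 1) - 1 < p) : Weird (2 ^ k * p * q) := by
  have hσ : sigma' (2 ^ k * p * q) = 2 * (2 ^ k * p * q) + 2 ^ (k + 1) := by
    have : (sigma' (2 ^ k * p * q) : ℤ) = 2 * (2 ^ k * p * q) + 2 ^ (k + 1) := by linarith
    exact_mod_cast this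
  have hpow_ne : 2 ^ (k + 1) ≠ p := fun h =>
    Nat.not_even_iff_odd.2 hop (h ▸ (Nat.even_pow' k.succ_ne_zero).2 even_two)
  have hpow_lt : 2 ^ (k + 1) < p := by omega
  refine ⟨show 2 * _ < _ from hσ ▸ Nat.lt_add_of_pos_right (Nat.two_pow_pos _),
    not_pseudoperfect_of_sum_small_divisors_lt ?_⟩
  rw [hσ, Nat.add_sub_cancel_left]
  exact sum_small_divisors_two_pow_mul_prime_mul_prime_lt hp hq hpow_lt (hpow_lt.trans hpq)
    le_rfl

theorem weird_of_abundance_eq (k p q : ℕ) (hk : 1 ≤ k) (hp : p.Prime) (hq : q.Prime)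
    (hop : Odd p) (hoq : Odd q) (hpq : p < q)
    (ha : (sigma' (2 ^ k * p * q) : ℤ) - 2 * (2 ^ k * p * q) = 2 ^ (k + 1))
    (hMp : 2 ^ (k + 1) - 1 < p) : Weird (2 ^ k * p * q) :=
  weird_of_abundance_eq_general k p q hp hq hop hpq ha hMp
end

section
/- Let k ≥ 1 and suppose 2^k - 1 = u·v with u, v positive integers and 0 ≤ i ≤ k. If p = 2^{i+1}(2^{k-i} + u) - 1 and q = 2^{k-i+1}(2^i + v) - 1 are both prime and p < q, then n = 2^k·p·q is a weird number. -/
lemma geom2 (m : ℕ) : ∑ j ∈ Finset.range m, 2 ^ j = 2 ^ m - 1 := by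
  induction m with
  | zero => simp
  | succ n ih =>
    rw [Finset.sum_range_succ, ih, pow_succ]
    have := Nat.one_le_two_pow (n := n)
    omega

theorem weird_of_pq_construction (k u v i p q : ℕ) (hk : 1 ≤ k) (hu : 0 < u) (hv : 0 < v)
    (huv : 2 ^ k - 1 = u * v) (hi : i ≤ k)
    (hpdef : p = 2 ^ (i + 1) * (2 ^ (k - i) + u) - 1)
    (hqdef : q = 2 ^ (k - i + 1) * (2 ^ i + v) - 1)
    (hp : p.Prime) (hq : q.Prime) (hpq : p < q) :
    Weird (2 ^ k * p * q) := by
  have hp0 : 0 < p := hp.pos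
  have hq0 : 0 < q := hq.pos
  set a := 2 ^ i with ha
  set b := 2 ^ (k - i) with hb
  have ha0 : 0 < a := Nat.pow_pos (by norm_num)
  have hb0 : 0 < b := Nat.pow_pos (by norm_num)
  have hab : a * b = 2 ^ k := by rw [ha, hb, ← pow_add]; congr 1; omega
  have hP : p + 1 = 2 ^ (i + 1) * (2 ^ (k - i) + u) := by
    rw [hpdef, Nat.sub_add_cancel (Nat.one_le_iff_ne_zero.mpr (by positivity))]
  have hQ : q + 1 = 2 ^ (k - i + 1) * (2 ^ i + v) := by
    rw [hqdef, Nat.sub_add_cancel (Nat.one_le_iff_ne_zero.mpr (by positivity))]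
  have hP' : p + 1 = 2 * a * (b + u) := by rw [hP, pow_succ]; ring
  have hQ' : q + 1 = 2 * b * (a + v) := by rw [hQ, pow_succ]; ring
  have huv1 : u * v + 1 = 2 ^ k := by
    rw [← huv, Nat.sub_add_cancel Nat.one_le_two_pow]
  -- p > 2^(k+1)
  have hp_gt : 2 ^ (k + 1) < p := by
    have key2 : p + 1 = 2 ^ (k + 1) + 2 * (a * u) := by
      rw [hP', pow_succ, ← hab]; ring
    have h3 : 0 < a * u := by positivity
    generalize a * u = w at key2 h3
    omega
  have h4le : 4 ≤ 2 ^ (k + 1) := by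
    calc (4:ℕ) = 2 ^ 2 := by norm_num
    _ ≤ 2 ^ (k + 1) := Nat.pow_le_pow_right (by norm_num) (by omega)
  -- coprimality
  have hc2p : Nat.Coprime 2 p := (Nat.coprime_primes Nat.prime_two hp).mpr (by omega)
  have hc2q : Nat.Coprime 2 q := (Nat.coprime_primes Nat.prime_two hq).mpr (by omega)
  have hcp : Nat.Coprime (2 ^ k) (p * q) :=
    Nat.Coprime.pow_left _ (Nat.Coprime.mul_right hc2p hc2q)
  have hcpq : Nat.Coprime p q := (Nat.coprime_primes hp hq).mpr (by omega)
  -- sigma computation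
  have hp2 := hp.two_le
  have hq2 := hq.two_le
  have hσ : sigma' (2 ^ k * p * q) = (2 ^ (k + 1) - 1) * ((1 + p) * (1 + q)) := by
    unfold sigma'
    rw [mul_assoc, hcp.sum_divisors_mul, hcpq.sum_divisors_mul, hp.divisors, hq.divisors,
      Nat.sum_divisors_prime_pow Nat.prime_two,
      Finset.sum_pair (by omega : (1:ℕ) ≠ p), Finset.sum_pair (by omega : (1:ℕ) ≠ q), geom2]
  -- key identity
  have hnat : 2 ^ (k + 1) * ((1 + p) * (1 + q))
      = 2 * (2 ^ k * p * q) + 2 ^ (k + 1) + (1 + p) * (1 + q) := by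
    have hPz : ((p : ℤ) + 1) = 2 * (a : ℤ) * ((b : ℤ) + (u : ℤ)) := by exact_mod_cast hP'
    have hQz : ((q : ℤ) + 1) = 2 * (b : ℤ) * ((a : ℤ) + (v : ℤ)) := by exact_mod_cast hQ'
    have habz : (a : ℤ) * (b : ℤ) = 2 ^ k := by exact_mod_cast hab
    have huvz : (u : ℤ) * (v : ℤ) + 1 = (a : ℤ) * (b : ℤ) := by rw [habz]; exact_mod_cast huv1
    have goalz : (2 : ℤ) ^ (k + 1) * ((1 + (p : ℤ)) * (1 + (q : ℤ)))
        = 2 * (2 ^ k * (p : ℤ) * (q : ℤ)) + 2 ^ (k + 1) + (1 + (p : ℤ)) * (1 + (q : ℤ)) := by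
      have h1 : (2 : ℤ) ^ (k + 1) = 2 * ((a : ℤ) * (b : ℤ)) := by rw [pow_succ, ← habz]; ring
      rw [h1, ← habz]
      linear_combination (2 * (a : ℤ) * b - ((q : ℤ) + 1)) * hPz
        + (2 * (a : ℤ) * b - 2 * (a : ℤ) * ((b : ℤ) + u)) * hQz
        + (-4 * (a : ℤ) * b) * huvz
    exact_mod_cast goalz
  have hσn : sigma' (2 ^ k * p * q) = 2 * (2 ^ k * p * q) + 2 ^ (k + 1) := by
    rw [hσ, Nat.sub_one_mul]
    generalize ht : (1 + p) * (1 + q) = t at hnat ⊢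
    generalize hg : 2 ^ (k + 1) * t = g at hnat ⊢
    generalize hN : 2 ^ k * p * q = N at hnat ⊢
    omega
  have hn0 : 0 < 2 ^ k * p * q := by positivity
  constructor
  · -- Abundant
    unfold Abundant
    rw [hσn]
    have : 0 < 2 ^ (k + 1) := by positivity
    omega
  · -- not Pseudoperfect
    rintro ⟨s, hs, hsum⟩
    have hsum_pd : ∑ d ∈ (2 ^ k * p * q).properDivisors, d
        = 2 ^ k * p * q + 2 ^ (k + 1) := by
      have h1 := Nat.sum_divisors_eq_sum_properDivisors_add_self (n := 2 ^ k * p * q)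
      unfold sigma' at hσn
      generalize hN : 2 ^ k * p * q = N at hσn h1 ⊢
      omega
    have htsum : ∑ d ∈ ((2 ^ k * p * q).properDivisors \ s), d = 2 ^ (k + 1) := by
      have h1 : ∑ d ∈ ((2 ^ k * p * q).properDivisors \ s), d + ∑ d ∈ s, d
          = ∑ d ∈ (2 ^ k * p * q).properDivisors, d := Finset.sum_sdiff hs
      generalize hN : 2 ^ k * p * q = N at h1 hsum hsum_pd ⊢
      omega
    by_cases hall : ∀ d ∈ (2 ^ k * p * q).properDivisors \ s, d ∣ 2 ^ k
    · -- all elements are powers of 2: sum too small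
      have hsub : (2 ^ k * p * q).properDivisors \ s ⊆ (2 ^ k).divisors := by
        intro d hd
        exact Nat.mem_divisors.mpr ⟨hall d hd, pow_ne_zero _ two_ne_zero⟩
      have hle : ∑ d ∈ ((2 ^ k * p * q).properDivisors \ s), d
          ≤ ∑ d ∈ (2 ^ k).divisors, d :=
        Finset.sum_le_sum_of_subset hsub
      have hval : ∑ d ∈ (2 ^ k).divisors, d = 2 ^ (k + 1) - 1 := by
        rw [Nat.sum_divisors_prime_pow Nat.prime_two, geom2]
      rw [htsum, hval] at hle
      omega
    · push_neg at hall
      obtain ⟨d, hd, hnd⟩ := hall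
      have hd' := Finset.mem_sdiff.mp hd
      have hdp := Nat.mem_properDivisors.mp hd'.1
      have hdvd : d ∣ 2 ^ k * p * q := hdp.1
      have hd0 : 0 < d := by
        rcases Nat.eq_zero_or_pos d with h | h
        · subst h; exact absurd (Nat.eq_zero_of_zero_dvd hdvd) (by omega)
        · exact h
      have hpd : p ∣ d ∨ q ∣ d := by
        by_contra hcon
        push_neg at hcon
        have h1 : Nat.Coprime d q := ((hq.coprime_iff_not_dvd).mpr hcon.2).symm
        have h2 : d ∣ 2 ^ k * p := h1.dvd_of_dvd_mul_right hdvd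
        have h3 : Nat.Coprime d p := ((hp.coprime_iff_not_dvd).mpr hcon.1).symm
        exact hnd (h3.dvd_of_dvd_mul_right h2)
      have hpled : p ≤ d := by
        rcases hpd with h | h
        · exact Nat.le_of_dvd hd0 h
        · exact le_trans (le_of_lt hpq) (Nat.le_of_dvd hd0 h)
      have hdle : d ≤ ∑ x ∈ ((2 ^ k * p * q).properDivisors \ s), x :=
        Finset.single_le_sum (f := fun x => x) (fun x _ => Nat.zero_le x) hd
      rw [htsum] at hdle
      omega
end

section
/- For every k ≥ 1 and m ≥ 1 and odd prime p, the number 2^k·p^m is deficient, perfect, or pseudoperfect; in particular it is never weird. -/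
/-!
If `2 ^ (k + 1) ≤ p`, then `σ(p^m) (p - 1) < p^(m+1)` bounds the abundancy of `2^k p^m` strictly by
`(2^(k+1) - 1) / 2^k · p / (p - 1) ≤ 2`, so the number is deficient. Otherwise `p < 2^(k+1)`,
and `2^k p^m` is the sum of the proper divisors `2^i p^m` for `i < k`, which contribute
`(2^k - 1) p^m`, and `2^j p^(m-1)` for the binary digits `2^j` of `p`, which contribute `p^m`.
-/

open Finset

theorem sigma'_two_pow_mul {k q : ℕ} (hq : Odd q) :
    sigma' (2 ^ k * q) = (2 ^ (k + 1) - 1) * sigma' q := by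
  rw [sigma', sigma', Nat.Coprime.sum_divisors_mul ((Nat.coprime_two_left.2 hq).pow_left k),
    Nat.sum_divisors_prime_pow Nat.prime_two, Nat.geomSum_eq le_rfl, Nat.div_one]

theorem sigma'_prime_pow_mul_pred_lt {p : ℕ} (hp : p.Prime) (m : ℕ) :
    sigma' (p ^ m) * (p - 1) < p ^ (m + 1) := by
  have hgeom := geom_sum_mul (p : ℤ) (m + 1)
  rw [sigma', Nat.sum_divisors_prime_pow hp]
  zify [hp.one_le]
  linarith

theorem sigma'_two_pow_mul_prime_pow_lt {k m p : ℕ} (hp : p.Prime) (hop : Odd p)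
    (hpk : 2 ^ (k + 1) ≤ p) : sigma' (2 ^ k * p ^ m) < 2 * (2 ^ k * p ^ m) := by
  have hS := sigma'_prime_pow_mul_pred_lt hp m
  rw [sigma'_two_pow_mul hop.pow, ← mul_assoc, ← pow_succ']
  set N := 2 ^ (k + 1)
  set S := sigma' (p ^ m)
  have hN : 1 ≤ N := Nat.one_le_two_pow
  refine Nat.lt_of_mul_lt_mul_left (a := p) ?_
  zify [hp.one_le, hN] at hS hpk ⊢
  calc (p : ℤ) * ((N - 1) * S) ≤ N * (S * (p - 1)) := by
        nlinarith [mul_le_mul_of_nonneg_right hpk (by positivity : (0 : ℤ) ≤ S)]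
    _ < N * p ^ (m + 1) := by gcongr
    _ = p * (N * p ^ m) := by ring

theorem pseudoperfect_two_pow_mul_mul_s18 {k q a : ℕ} (hq : Odd q) (hq1 : 1 < q)
    (hqk : q < 2 ^ (k + 1)) (ha : 0 < a) : Pseudoperfect (2 ^ k * q * a) := by
  have hinj₁ : Function.Injective fun i => 2 ^ i * q * a := fun i j h => by
    simpa [ha.ne', hq.pos.ne'] using h
  have hinj₂ : Function.Injective fun i => 2 ^ i * a := fun i j h => by
    simpa [ha.ne'] using h
  have hdisj : Disjoint ((range k).image fun i => 2 ^ i * q * a)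
      (q.bitIndices.toFinset.image fun i => 2 ^ i * a) := by
    simp only [disjoint_left, mem_image]
    rintro _ ⟨i, -, rfl⟩ ⟨j, -, h⟩
    have : q ∣ 2 ^ j := ⟨2 ^ i, by simpa [ha.ne', mul_comm] using h⟩
    exact hq1.ne' (((Nat.coprime_two_right.2 hq).pow_right j).eq_one_of_dvd this)
  refine ⟨((range k).image fun i => 2 ^ i * q * a) ∪
    (q.bitIndices.toFinset.image fun i => 2 ^ i * a), union_subset ?_ ?_, ?_⟩
  · simp only [subset_iff, mem_image, mem_range, Nat.mem_properDivisors]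
    rintro _ ⟨i, hi, rfl⟩
    refine ⟨by gcongr, ?_⟩
    gcongr
    norm_num
  · simp only [subset_iff, mem_image, List.mem_toFinset, Nat.mem_properDivisors]
    rintro _ ⟨j, hj, rfl⟩
    have hjk : j ≤ k := by
      have := (Nat.two_pow_le_of_mem_bitIndices hj).trans_lt hqk
      rw [Nat.pow_lt_pow_iff_right (by norm_num)] at this
      omega
    refine ⟨mul_dvd_mul_right (dvd_mul_of_dvd_left (pow_dvd_pow 2 hjk) q) a, ?_⟩
    calc 2 ^ j * a ≤ 2 ^ k * a := by gcongr; norm_num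
      _ < 2 ^ k * q * a :=
        mul_lt_mul_of_pos_right (lt_mul_of_one_lt_right (by positivity) hq1) ha
  · rw [sum_union hdisj, sum_image hinj₁.injOn, sum_image hinj₂.injOn, ← sum_mul, ← sum_mul,
      ← sum_mul, sum_toFinset_bitIndices_two_pow, Nat.geomSum_eq le_rfl, Nat.div_one]
    have : 1 ≤ 2 ^ k := Nat.one_le_two_pow
    zify [this]
    ring

theorem not_weird_iff {n : ℕ} : ¬ Weird n ↔
    sigma' n < 2 * n ∨ sigma' n = 2 * n ∨ (Abundant n ∧ Pseudoperfect n) := by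
  rw [Weird, Abundant, not_and_not_right]
  grind

theorem two_pow_mul_prime_pow_not_weird_general (k m p : ℕ) (hm : 1 ≤ m)
    (hp : p.Prime) (hop : Odd p) :
    (sigma' (2 ^ k * p ^ m) < 2 * (2 ^ k * p ^ m) ∨
      sigma' (2 ^ k * p ^ m) = 2 * (2 ^ k * p ^ m) ∨
      (Abundant (2 ^ k * p ^ m) ∧ Pseudoperfect (2 ^ k * p ^ m))) ∧
    ¬ Weird (2 ^ k * p ^ m) := by
  have hnw : ¬ Weird (2 ^ k * p ^ m) := by
    rcases lt_or_ge p (2 ^ (k + 1)) with hpk | hpk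
    · obtain ⟨j, rfl⟩ : ∃ j, m = j + 1 := ⟨m - 1, by omega⟩
      have hps := pseudoperfect_two_pow_mul_mul_s18 hop hp.one_lt hpk (pow_pos hp.pos j)
      rw [mul_assoc, ← pow_succ'] at hps
      exact fun hw => hw.2 hps
    · exact fun hw => (sigma'_two_pow_mul_prime_pow_lt hp hop hpk).not_gt hw.1
  exact ⟨not_weird_iff.1 hnw, hnw⟩

theorem two_pow_mul_prime_pow_not_weird (k m p : ℕ) (hk : 1 ≤ k) (hm : 1 ≤ m)
    (hp : p.Prime) (hop : Odd p) :
    (sigma' (2 ^ k * p ^ m) < 2 * (2 ^ k * p ^ m) ∨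
      sigma' (2 ^ k * p ^ m) = 2 * (2 ^ k * p ^ m) ∨
      (Abundant (2 ^ k * p ^ m) ∧ Pseudoperfect (2 ^ k * p ^ m))) ∧
    ¬ Weird (2 ^ k * p ^ m) :=
  two_pow_mul_prime_pow_not_weird_general k m p hm hp hop
end

section
/- Every weird number of the form 2^k·p·q (k ≥ 1, p < q odd primes) is primitive weird, i.e., none of its proper divisors is weird. -/
/-!
A proper divisor of `2^k p q` is `2^a`, `2^a r` with `r ∈ {p, q}`, or `2^a p q` with `a < k`.
Powers of two are deficient. If `2^a r` is abundant then `r < 2^(a+1)`, and then `2^a r` is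
pseudoperfect: it is `∑_{i<a} 2^i r` plus the binary expansion of `r`. Multiplying by `q`, the
same construction shows that `2^k p q` is pseudoperfect as soon as `p < 2^(k+1)`; so weirdness
of `2^k p q` forces `p ≥ 2^(k+1)`, which is too large for `2^a p q` with `a < k` to be abundant.
-/

lemma sigma'_lt_of_deficient {m : ℕ} (hm : m.Deficient) : sigma' m < 2 * m := by
  rw [sigma', Nat.sum_divisors_eq_sum_properDivisors_add_self, two_mul]
  exact Nat.add_lt_add_right hm m

lemma not_abundant_of_deficient {m : ℕ} (hm : m.Deficient) : ¬ Abundant m :=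
  (sigma'_lt_of_deficient hm).not_gt

lemma sigma'_mul_prime {m r : ℕ} (hr : r.Prime) (hmr : m.Coprime r) :
    sigma' (m * r) = sigma' m * (r + 1) := by
  rw [sigma', hmr.sum_divisors_mul, hr.sum_divisors]
  rfl

lemma lt_two_mul_of_abundant_mul_prime {m r : ℕ} (hm : m.Deficient) (hr : r.Prime)
    (hmr : m.Coprime r) (h : Abundant (m * r)) : r < 2 * m := by
  have hs := sigma'_lt_of_deficient hm
  rw [Abundant, sigma'_mul_prime hr hmr] at h
  nlinarith

lemma lt_four_mul_of_abundant_mul_prime_mul_prime {m p q : ℕ} (hm : m.Deficient)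
    (hp : p.Prime) (hq : q.Prime) (hpq : p < q) (hmp : m.Coprime p) (hmq : m.Coprime q)
    (h : Abundant (m * p * q)) : p < 4 * m := by
  have hs := sigma'_lt_of_deficient hm
  have hpq' : (m * p).Coprime q :=
    Nat.Coprime.mul_left hmq ((Nat.coprime_primes hp hq).mpr hpq.ne)
  rw [Abundant, sigma'_mul_prime hq hpq', sigma'_mul_prime hp hmp] at h
  have key : (p + 1) * (q + 1) < 2 * m * (p + q + 1) := by
    nlinarith [Nat.mul_le_mul_right ((p + 1) * (q + 1)) hs]
  have : p * q < 4 * m * q := by nlinarith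
  exact Nat.lt_of_mul_lt_mul_right this

lemma Pseudoperfect.mul_right {n : ℕ} (h : Pseudoperfect n) (c : ℕ) :
    Pseudoperfect (n * c) := by
  rcases Nat.eq_zero_or_pos c with rfl | hc
  · exact ⟨∅, Finset.empty_subset _, by simp⟩
  obtain ⟨s, hs, hsum⟩ := h
  refine ⟨s.image (· * c), ?_, ?_⟩
  · intro x hx
    obtain ⟨d, hd, rfl⟩ := Finset.mem_image.mp hx
    obtain ⟨hdn, hlt⟩ := Nat.mem_properDivisors.mp (hs hd)
    exact Nat.mem_properDivisors.mpr
      ⟨Nat.mul_dvd_mul_right hdn c, Nat.mul_lt_mul_of_pos_right hlt hc⟩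
  · rw [Finset.sum_image fun _ _ _ _ => Nat.eq_of_mul_eq_mul_right hc, ← Finset.sum_mul, hsum]

lemma two_pow_mul_ne_two_pow_s19 {r : ℕ} (hr : Odd r) (hr1 : 1 < r) (i j : ℕ) :
    2 ^ i * r ≠ 2 ^ j := fun h =>
  hr1.ne' (((Nat.coprime_two_left.mpr hr).pow_left j).symm.eq_one_of_dvd
    (h ▸ Dvd.intro_left _ rfl))

lemma pseudoperfect_two_pow_mul {a r : ℕ} (hr : Odd r) (hr1 : 1 < r) (hra : r < 2 ^ (a + 1)) :
    Pseudoperfect (2 ^ a * r) := by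
  set bits := r.bitIndices.toFinset
  have hbits : ∀ i ∈ bits, i ≤ a := fun i hi =>
    Nat.lt_succ_iff.mp <| (Nat.pow_lt_pow_iff_right (by norm_num)).mp <|
      (Nat.two_pow_le_of_mem_bitIndices (List.mem_toFinset.mp hi)).trans_lt hra
  have hdisj : Disjoint ((Finset.range a).image (2 ^ · * r)) (bits.image (2 ^ ·)) := by
    simp only [Finset.disjoint_left, Finset.mem_image, not_exists, not_and]
    rintro _ ⟨i, -, rfl⟩ j - h
    exact two_pow_mul_ne_two_pow_s19 hr hr1 i j h.symm
  refine ⟨(Finset.range a).image (2 ^ · * r) ∪ bits.image (2 ^ ·), ?_, ?_⟩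
  · refine Finset.union_subset ?_ ?_ <;> intro x hx <;>
      obtain ⟨i, hi, rfl⟩ := Finset.mem_image.mp hx <;> rw [Nat.mem_properDivisors]
    · have hia : i < a := Finset.mem_range.mp hi
      exact ⟨Nat.mul_dvd_mul_right (Nat.pow_dvd_pow 2 hia.le) r,
        Nat.mul_lt_mul_of_pos_right (Nat.pow_lt_pow_right (by norm_num) hia) (by omega)⟩
    · have hia := hbits i hi
      exact ⟨(Nat.pow_dvd_pow 2 hia).mul_right r,
        (Nat.pow_le_pow_right (by norm_num) hia).trans_lt (lt_mul_of_one_lt_right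
          (by positivity) hr1)⟩
  · have hgeom : ∑ i ∈ Finset.range a, 2 ^ i = 2 ^ a - 1 := by
      simpa using Nat.geomSum_eq (le_refl 2) a
    rw [Finset.sum_union hdisj,
      Finset.sum_image fun _ _ _ _ h => Nat.pow_right_injective (le_refl 2)
        (Nat.eq_of_mul_eq_mul_right (by omega) h),
      Finset.sum_image fun _ _ _ _ h => Nat.pow_right_injective (le_refl 2) h,
      ← Finset.sum_mul, hgeom, Finset.sum_toFinset_bitIndices_two_pow, Nat.sub_one_mul]
    have : r ≤ 2 ^ a * r := Nat.le_mul_of_pos_left r (by positivity)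
    omega

lemma not_weird_two_pow_mul_prime (a : ℕ) {r : ℕ} (hr : r.Prime) (hodd : Odd r) :
    ¬ Weird (2 ^ a * r) := fun ⟨habund, hnot⟩ =>
  have hra : r < 2 * 2 ^ a := lt_two_mul_of_abundant_mul_prime Nat.prime_two.deficient_pow hr
    ((Nat.coprime_two_left.mpr hodd).pow_left a) habund
  hnot (pseudoperfect_two_pow_mul hodd hr.one_lt (by rwa [pow_succ']))

theorem weird_2kpq_primitive_general (k p q : ℕ) (hp : p.Prime) (hq : q.Prime)
    (hop : Odd p) (hoq : Odd q) (hpq : p < q) (hw : Weird (2 ^ k * p * q)) :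
    ∀ d : ℕ, d ∣ 2 ^ k * p * q → d < 2 ^ k * p * q → ¬ Weird d := by
  intro d hd hlt hweird
  obtain ⟨d', e, hd', he, rfl⟩ := Nat.dvd_mul.mp hd
  obtain ⟨t, f, ht, hf, rfl⟩ := Nat.dvd_mul.mp hd'
  obtain ⟨a, -, rfl⟩ := (Nat.dvd_prime_pow Nat.prime_two).mp ht
  have hdef : (2 ^ a).Deficient := Nat.prime_two.deficient_pow
  have hpk : 2 ^ (k + 1) ≤ p := by
    by_contra! hsmall
    exact hw.2 ((pseudoperfect_two_pow_mul hop hp.one_lt hsmall).mul_right q)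
  rcases (Nat.dvd_prime hp).mp hf with rfl | rfl <;> rcases (Nat.dvd_prime hq).mp he with rfl | rfl
  · exact not_abundant_of_deficient hdef (by simpa using hweird.1)
  · exact not_weird_two_pow_mul_prime a hq hoq (by simpa using hweird)
  · exact not_weird_two_pow_mul_prime a hp hop (by simpa using hweird)
  · have hak : a < k := (Nat.pow_lt_pow_iff_right (by norm_num)).mp <|
      Nat.lt_of_mul_lt_mul_right (Nat.lt_of_mul_lt_mul_right hlt)
    have hp4 := lt_four_mul_of_abundant_mul_prime_mul_prime hdef hp hq hpq
      ((Nat.coprime_two_left.mpr hop).pow_left a) ((Nat.coprime_two_left.mpr hoq).pow_left a)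
      hweird.1
    have : 4 * 2 ^ a ≤ 2 ^ (k + 1) := by
      rw [show 4 * 2 ^ a = 2 ^ (a + 2) by ring]
      exact Nat.pow_le_pow_right (by norm_num) (by omega)
    omega

theorem weird_2kpq_primitive (k p q : ℕ) (hk : 1 ≤ k) (hp : p.Prime) (hq : q.Prime)
    (hop : Odd p) (hoq : Odd q) (hpq : p < q) (hw : Weird (2 ^ k * p * q)) :
    ∀ d : ℕ, d ∣ 2 ^ k * p * q → d < 2 ^ k * p * q → ¬ Weird d :=
  weird_2kpq_primitive_general k p q hp hq hop hoq hpq hw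
end
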